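/- Let S be an RN module over ℝ with base (Ω, F, P) and let D ∈ F̃ with D ⊂ H(S) and P(D) > 0. Then the following are equivalent: (1) Rank_D(S) ≥ 2; (2) for every ε ∈ L⁰(F,ℝ) with ε ≥ 0 and 0 < ε ≤ 2 on D there exist u, v ∈ S with ‖u‖ = ‖v‖ = I_D and ‖u − v‖ = ε·I_D. -/

import Mathlib

open MeasureTheory Filter Set

noncomputable section

namespace RNM

variable {Ω : Type*} [MeasurableSpace Ω]

/-- `L⁰(F, ℝ)`: equivalence classes of real random variables mod a.e. equality. -/
abbrev L0 (μ : Measure Ω) : Type _ := Ω →ₘ[μ] ℝ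

open Classical in
/-- The equivalence class of the indicator function of a (measurable) set. -/
noncomputable def ind (μ : Measure Ω) (A : Set Ω) : L0 μ :=
  if h : MeasurableSet A then
    AEEqFun.mk (A.indicator fun _ => (1 : ℝ)) (aestronglyMeasurable_const.indicator h)
  else 0

/-- The constant function, as an element of `L⁰`. -/
noncomputable def cst (μ : Measure Ω) (r : ℝ) : L0 μ := AEEqFun.const Ω r

/-- `A ⊂ B` modulo null sets. -/
def aeSub (μ : Measure Ω) (A B : Set Ω) : Prop := μ (A \ B) = 0

/-- `A = B` modulo null sets. -/
def aeEqS (μ : Measure Ω) (A B : Set Ω) : Prop := μ ((A \ B) ∪ (B \ A)) = 0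

variable {μ : Measure Ω} {S : Type*} [AddCommGroup S]

/-- The axioms of a random normed module over ℝ with base `(Ω, F, μ)`: `S` is a left module
over the algebra `L⁰(F,ℝ)` (with module multiplication `sm`) and `nrm` is an `L⁰`-norm. -/
structure IsRNModule (μ : Measure Ω) (sm : L0 μ → S → S) (nrm : S → L0 μ) : Prop where
  smul_add : ∀ ξ x y, sm ξ (x + y) = sm ξ x + sm ξ y
  add_smul : ∀ ξ η x, sm (ξ + η) x = sm ξ x + sm η x
  mul_smul : ∀ ξ η x, sm (ξ * η) x = sm ξ (sm η x)
  one_smul : ∀ x, sm 1 x = x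
  nrm_nonneg : ∀ x, 0 ≤ nrm x
  nrm_smul : ∀ ξ x, nrm (sm ξ x) = |ξ| * nrm x
  nrm_add : ∀ x y, nrm (x + y) ≤ nrm x + nrm y
  nrm_eq_zero : ∀ x, nrm x = 0 → x = 0

/-- `x` and `y` are `L⁰`-independent on `F`. -/
def Indep (sm : L0 μ → S → S) (x y : S) (F : Set Ω) : Prop :=
  ∀ ξ η : L0 μ, sm (ξ * ind μ F) x + sm (η * ind μ F) y = 0 →
    ξ * ind μ F = 0 ∧ η * ind μ F = 0

/-- `Rank_D(S) ≥ 2`. -/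
def RankGe2 (sm : L0 μ → S → S) (D : Set Ω) : Prop := ∃ x y : S, Indep sm x y D

/-- `A_x = [‖x‖ > 0]`. -/
def Aset (nrm : S → L0 μ) (x : S) : Set Ω := {ω | 0 < (nrm x) ω}

/-- `A_{xy} = A_x ∩ A_y`. -/
def Axy (nrm : S → L0 μ) (x y : S) : Set Ω := Aset nrm x ∩ Aset nrm y

/-- `B_{xy} = A_{xy} ∩ A_{x-y}`. -/
def Bxy (nrm : S → L0 μ) (x y : S) : Set Ω := Axy nrm x y ∩ Aset nrm (x - y)

/-- `H` is (a representative of) the support `H(S) = [⋁{‖x‖ : x ∈ S} > 0]`. -/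
def IsSupport (nrm : S → L0 μ) (H : Set Ω) : Prop :=
  MeasurableSet H ∧ (∀ x : S, aeSub μ (Aset nrm x) H) ∧
    ∀ B : Set Ω, MeasurableSet B → aeSub μ B H → 0 < μ B →
      ∃ x : S, 0 < μ (B ∩ Aset nrm x)

/-- A sequence in `S` is Cauchy for the topology of convergence in probability. -/
def CauchyInProb (μ : Measure Ω) (nrm : S → L0 μ) (u : ℕ → S) : Prop :=
  ∀ ε : ℝ, 0 < ε →
    Tendsto (fun p : ℕ × ℕ => μ {ω | ε ≤ |(nrm (u p.1 - u p.2)) ω|}) atTop (nhds 0)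

/-- `u n → x` in probability (i.e. `‖u n - x‖ → 0` in probability). -/
def TendstoInProb (μ : Measure Ω) (nrm : S → L0 μ) (u : ℕ → S) (x : S) : Prop :=
  ∀ ε : ℝ, 0 < ε →
    Tendsto (fun n => μ {ω | ε ≤ |(nrm (u n - x)) ω|}) atTop (nhds 0)

/-- Completeness of a random normed module. -/
def CompleteRN (μ : Measure Ω) (nrm : S → L0 μ) : Prop :=
  ∀ u : ℕ → S, CauchyInProb μ nrm u → ∃ x : S, TendstoInProb μ nrm u x

/-- The random unit sphere `S(1)`. -/
def sphere (nrm : S → L0 μ) : Set S :=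
  {x | ∃ A : Set Ω, MeasurableSet A ∧ 0 < μ A ∧ nrm x = ind μ A}

/-- The random closed unit ball `U(1)`. -/
def ball (nrm : S → L0 μ) : Set S := {x | nrm x ≤ 1}

/-- `ε` is an admissible random convexity parameter on `D`: `ε ≥ 0` and `0 < ε ≤ 2` on `D`. -/
def Admissible (μ : Measure Ω) (D : Set Ω) (ε : L0 μ) : Prop :=
  0 ≤ ε ∧ ∀ᵐ ω ∂μ, ω ∈ D → 0 < ε ω ∧ ε ω ≤ 2

/-- midpoint `(x+y)/2`. -/
def mid (μ : Measure Ω) (sm : L0 μ → S → S) (x y : S) : S := sm (cst μ (1/2)) (x + y)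

/-- The set whose infimum (in the a.s. order of `L⁰`) is the modulus of random
convexity `δ_D(ε)`. -/
def modSet (μ : Measure Ω) (sm : L0 μ → S → S) (nrm : S → L0 μ) (D : Set Ω) (ε : L0 μ) :
    Set (L0 μ) :=
  {z | ∃ x ∈ sphere nrm, ∃ y ∈ sphere nrm, aeSub μ D (Bxy nrm x y) ∧
    ε * ind μ D ≤ ind μ D * nrm (x - y) ∧
    z = ind μ D - ind μ D * nrm (mid μ sm x y)}

/-- `S` is random uniformly convex: `δ_{H(S)}(ε) > 0` on `H(S)` for every admissible `ε`. -/
def RandomUniformlyConvex (μ : Measure Ω) (sm : L0 μ → S → S) (nrm : S → L0 μ)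
    (H : Set Ω) : Prop :=
  ∀ ε : L0 μ, Admissible μ H ε → ∀ d : L0 μ, IsGLB (modSet μ sm nrm H ε) d →
    ∀ᵐ ω ∂μ, ω ∈ H → 0 < d ω

/-- `G` is (a representative of) `G(S)`. -/
def IsGSet (μ : Measure Ω) (sm : L0 μ → S → S) (H G : Set Ω) : Prop :=
  MeasurableSet G ∧ aeSub μ G H ∧ 0 < μ G ∧ RankGe2 sm G ∧
    ∀ D : Set Ω, MeasurableSet D → aeSub μ D (H \ G) → 0 < μ D → ¬ RankGe2 sm D

/-!
Normalise `L⁰`-independent `x, y` on `D` to `e₁, e₂` with `‖e₁‖ = ‖e₂‖ = I_D`. The McShane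
extension from rational coefficients gives a version `M ω a b` of `‖a e₁ + b e₂‖(ω)` that is
measurable in `ω` and `1`-Lipschitz in `(a, b)`; by the triangle inequality in `S` it also
computes `‖ξ e₁ + η e₂‖` for random coefficients `ξ, η`, and independence makes `M ω` definite
for a.e. `ω ∈ D`. Along the path `(1 - 2t, t - t²)` from `e₁` to `-e₁`, rescaled to the unit
sphere of `M ω`, the distance to `e₁` runs continuously from `0` to `2`, so a measurably chosen
intermediate-value time `τ` yields `v` with `‖e₁ - v‖ = ε` on `D`.

Conversely, with `ε = 1`, if `a u + b v = 0` where `‖u‖ = ‖v‖ = ‖u - v‖ = I_D`, then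
`|a| = |b| = |a + b|` on `D`, which forces `a = b = 0`.
-/

lemma coeFn_ind {A : Set Ω} (hA : MeasurableSet A) :
    ⇑(ind μ A) =ᵐ[μ] A.indicator fun _ => (1 : ℝ) := by
  rw [ind, dif_pos hA]
  exact AEEqFun.coeFn_mk _ _

lemma ind_le_one {A : Set Ω} (hA : MeasurableSet A) : ind μ A ≤ 1 := by
  rw [← AEEqFun.coeFn_le]
  filter_upwards [coeFn_ind hA, AEEqFun.coeFn_one (μ := μ) (β := ℝ)] with ω h₁ h₂
  rw [h₁, h₂]
  by_cases hω : ω ∈ A <;> simp [hω]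

lemma mul_ind_eq_zero_iff {A : Set Ω} (hA : MeasurableSet A) {ξ : L0 μ} :
    ξ * ind μ A = 0 ↔ ∀ᵐ ω ∂μ, ω ∈ A → ξ ω = 0 := by
  rw [AEEqFun.ext_iff]
  refine eventually_congr ?_
  filter_upwards [AEEqFun.coeFn_mul ξ (ind μ A), coeFn_ind hA,
    AEEqFun.coeFn_zero (μ := μ) (β := ℝ)] with ω h₁ h₂ h₃
  rw [h₁, h₃, Pi.mul_apply, h₂]
  by_cases hω : ω ∈ A <;> simp [hω]

namespace IsRNModule

variable {sm : L0 μ → S → S} {nrm : S → L0 μ} (h : IsRNModule μ sm nrm)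
include h

lemma zero_smul (x : S) : sm 0 x = 0 :=
  (AddMonoidHom.mk' (sm · x) (h.add_smul · · x)).map_zero

lemma neg_smul (ξ : L0 μ) (x : S) : sm (-ξ) x = -sm ξ x :=
  (AddMonoidHom.mk' (sm · x) (h.add_smul · · x)).map_neg ξ

lemma sub_smul (ξ η : L0 μ) (x : S) : sm (ξ - η) x = sm ξ x - sm η x :=
  (AddMonoidHom.mk' (sm · x) (h.add_smul · · x)).map_sub ξ η

lemma smul_sub (ξ : L0 μ) (x y : S) : sm ξ (x - y) = sm ξ x - sm ξ y :=
  (AddMonoidHom.mk' (sm ξ) (h.smul_add ξ)).map_sub x y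

lemma nrm_neg (x : S) : nrm (-x) = nrm x := by
  have habs : |(-1 : L0 μ)| = 1 := by
    refine AEEqFun.ext ?_
    filter_upwards [AEEqFun.coeFn_abs (-1 : L0 μ), AEEqFun.coeFn_neg (1 : L0 μ),
      AEEqFun.coeFn_one (μ := μ) (β := ℝ)] with ω h₁ h₂ h₃
    rw [h₁, h₂, Pi.neg_apply, h₃]
    simp
  rw [← h.one_smul x, ← h.neg_smul, h.nrm_smul, habs, h.one_smul, one_mul]

lemma nrm_zero : nrm (0 : S) = 0 := by
  have h₀ := h.nrm_smul 0 0
  rw [h.zero_smul] at h₀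
  rw [h₀]
  refine AEEqFun.ext ?_
  filter_upwards [AEEqFun.coeFn_mul (|(0 : L0 μ)|) (nrm 0), AEEqFun.coeFn_abs (0 : L0 μ),
    AEEqFun.coeFn_zero (μ := μ) (β := ℝ)] with ω m a z
  simp [m, a, z]

lemma ae_nrm_nonneg (x : S) : ∀ᵐ ω ∂μ, 0 ≤ nrm x ω := by
  filter_upwards [AEEqFun.coeFn_le.2 (h.nrm_nonneg x), AEEqFun.coeFn_zero (μ := μ) (β := ℝ)]
    with ω h₁ h₂
  rwa [h₂] at h₁

lemma ae_abs_sub_le (x y : S) : ∀ᵐ ω ∂μ, |nrm x ω - nrm y ω| ≤ nrm (x - y) ω := by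
  have h₁ : nrm x ≤ nrm y + nrm (x - y) := by
    simpa using h.nrm_add y (x - y)
  have h₂ : nrm y ≤ nrm x + nrm (x - y) := by
    have := h.nrm_add x (y - x)
    rwa [add_sub_cancel, ← neg_sub, h.nrm_neg] at this
  filter_upwards [AEEqFun.coeFn_le.2 h₁, AEEqFun.coeFn_le.2 h₂,
    AEEqFun.coeFn_add (nrm y) (nrm (x - y)), AEEqFun.coeFn_add (nrm x) (nrm (x - y))]
    with ω h₁ h₂ h₃ h₄
  rw [h₃, Pi.add_apply] at h₁
  rw [h₄, Pi.add_apply] at h₂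
  exact abs_sub_le_iff.2 ⟨by linarith, by linarith⟩

end IsRNModule

lemma eq_zero_of_abs_eq_abs_of_abs_eq_abs_add {a b : ℝ} (h₁ : |a| = |b|) (h₂ : |a| = |a + b|) :
    a = 0 := by
  have e₁ := congrArg (· ^ 2) h₁
  have e₂ := congrArg (· ^ 2) h₂
  simp only [sq_abs] at e₁ e₂
  have hb : b * (2 * a + b) = 0 := by linear_combination -e₂
  rcases mul_eq_zero.1 hb with hb | hb
  · simpa [hb] using e₁
  · have : a ^ 2 = 0 := by nlinarith
    exact pow_eq_zero_iff two_ne_zero |>.1 this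

variable {sm : L0 μ → S → S} {nrm : S → L0 μ}

lemma ae_eq_zero_of_smul_add_smul_eq_zero (hRN : IsRNModule μ sm nrm) {D : Set Ω}
    (hD : MeasurableSet D) {u v : S} (hu : nrm u = ind μ D) (hv : nrm v = ind μ D)
    (huv : nrm (u - v) = ind μ D) {a b : L0 μ} (hsum : sm a u + sm b v = 0) :
    ∀ᵐ ω ∂μ, ω ∈ D → a ω = 0 ∧ b ω = 0 := by
  have hab : sm a u = -sm b v := eq_neg_of_add_eq_zero_left hsum
  have n₁ : |a| * ind μ D = |b| * ind μ D :=
    calc |a| * ind μ D = nrm (sm a u) := by rw [hRN.nrm_smul, hu]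
      _ = nrm (sm b v) := by rw [hab, hRN.nrm_neg]
      _ = |b| * ind μ D := by rw [hRN.nrm_smul, hv]
  have n₂ : |a| * ind μ D = |a + b| * ind μ D :=
    calc |a| * ind μ D = nrm (sm a (u - v)) := by rw [hRN.nrm_smul, huv]
      _ = nrm (sm (a + b) v) := by
        rw [hRN.smul_sub, hRN.add_smul, hab, ← hRN.nrm_neg]; abel_nf
      _ = |a + b| * ind μ D := by rw [hRN.nrm_smul, hv]
  filter_upwards [AEEqFun.ext_iff.1 n₁, AEEqFun.ext_iff.1 n₂, coeFn_ind hD,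
    AEEqFun.coeFn_mul (|a|) (ind μ D), AEEqFun.coeFn_mul (|b|) (ind μ D),
    AEEqFun.coeFn_mul (|a + b|) (ind μ D), AEEqFun.coeFn_abs a, AEEqFun.coeFn_abs b,
    AEEqFun.coeFn_abs (a + b), AEEqFun.coeFn_add a b] with ω e₁ e₂ hI m₁ m₂ m₃ a₁ a₂ a₃ s hω
  simp only [m₁, m₂, m₃, Pi.mul_apply, a₁, a₂, a₃, s, Pi.add_apply, hI,
    indicator_of_mem hω, mul_one] at e₁ e₂
  have ha := eq_zero_of_abs_eq_abs_of_abs_eq_abs_add e₁ e₂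
  exact ⟨ha, by simpa [ha] using e₁.symm⟩

lemma indep_of_nrm_eq_ind (hRN : IsRNModule μ sm nrm) {D : Set Ω} (hD : MeasurableSet D)
    {u v : S} (hu : nrm u = ind μ D) (hv : nrm v = ind μ D) (huv : nrm (u - v) = ind μ D) :
    Indep sm u v D := by
  intro ξ η hsum
  have key := ae_eq_zero_of_smul_add_smul_eq_zero hRN hD hu hv huv hsum
  constructor <;> refine (mul_ind_eq_zero_iff hD).2 ?_ <;>
    filter_upwards [key, AEEqFun.coeFn_mul ξ (ind μ D), AEEqFun.coeFn_mul η (ind μ D),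
      coeFn_ind hD] with ω h m₁ m₂ hI hω
  · simpa [m₁, hI, hω] using (h hω).1
  · simpa [m₂, hI, hω] using (h hω).2

lemma exists_smul_nrm_eq_ind (hRN : IsRNModule μ sm nrm) {D : Set Ω} (hD : MeasurableSet D)
    {x : S} (hx : ∀ᵐ ω ∂μ, ω ∈ D → 0 < nrm x ω) :
    ∃ κ : L0 μ, (∀ᵐ ω ∂μ, κ ω = D.indicator (fun ω => (nrm x ω)⁻¹) ω) ∧
      nrm (sm κ x) = ind μ D := by
  have hf : Measurable (D.indicator fun ω => (nrm x ω)⁻¹) :=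
    (AEEqFun.measurable _).inv.indicator hD
  set κ := AEEqFun.mk _ hf.aestronglyMeasurable
  refine ⟨κ, AEEqFun.coeFn_mk _ _, ?_⟩
  rw [hRN.nrm_smul]
  refine AEEqFun.ext ?_
  filter_upwards [AEEqFun.coeFn_mul (|κ|) (nrm x), AEEqFun.coeFn_abs κ,
    AEEqFun.coeFn_mk _ hf.aestronglyMeasurable, coeFn_ind hD, hx] with ω m a hκ hI hx
  rw [m, Pi.mul_apply, a, hκ, hI]
  by_cases hω : ω ∈ D
  · simp [hω, abs_of_pos (inv_pos.2 (hx hω)), inv_mul_cancel₀ (hx hω).ne']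
  · simp [hω]

namespace Indep

variable {x y : S} {D : Set Ω}

lemma symm (h : Indep sm x y D) : Indep sm y x D := fun ξ η hsum =>
  (h η ξ (by rwa [add_comm])).symm

lemma smul_left (hRN : IsRNModule μ sm nrm) (hD : MeasurableSet D) (h : Indep sm x y D)
    {κ : L0 μ} (hκ : ∀ᵐ ω ∂μ, ω ∈ D → κ ω ≠ 0) : Indep sm (sm κ x) y D := by
  intro ξ η hsum
  rw [← hRN.mul_smul, mul_right_comm] at hsum
  obtain ⟨h₁, h₂⟩ := h _ _ hsum
  refine ⟨(mul_ind_eq_zero_iff hD).2 ?_, h₂⟩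
  filter_upwards [(mul_ind_eq_zero_iff hD).1 h₁, hκ, AEEqFun.coeFn_mul ξ κ] with ω h₁ hκ m hω
  simpa [m, hκ hω] using h₁ hω

lemma ae_pos_left (hRN : IsRNModule μ sm nrm) (hD : MeasurableSet D) (h : Indep sm x y D) :
    ∀ᵐ ω ∂μ, ω ∈ D → 0 < nrm x ω := by
  set E := D ∩ {ω | nrm x ω ≤ 0}
  have hE : MeasurableSet E := hD.inter (measurableSet_le (AEEqFun.measurable _) measurable_const)
  have hEx : nrm (sm (ind μ E * ind μ D) x) = 0 := by
    rw [hRN.nrm_smul]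
    refine AEEqFun.ext ?_
    filter_upwards [AEEqFun.coeFn_mul (|ind μ E * ind μ D|) (nrm x),
      AEEqFun.coeFn_abs (ind μ E * ind μ D), AEEqFun.coeFn_mul (ind μ E) (ind μ D),
      coeFn_ind hE, hRN.ae_nrm_nonneg x, AEEqFun.coeFn_zero (μ := μ) (β := ℝ)]
      with ω m a m' hI hx z
    rw [m, Pi.mul_apply, a, m', Pi.mul_apply, hI, z]
    by_cases hω : ω ∈ E
    · simp [hω, le_antisymm hω.2 hx]
    · simp [hω]
  obtain ⟨h₁, -⟩ := h (ind μ E) 0 (by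
    rw [hRN.nrm_eq_zero _ hEx, hRN.mul_smul, hRN.zero_smul, add_zero])
  filter_upwards [(mul_ind_eq_zero_iff hD).1 h₁, coeFn_ind hE] with ω h₁ hI hω
  by_contra hle
  have hωE : ω ∈ E := ⟨hω, not_lt.1 hle⟩
  simpa [hI, hωE] using h₁ hω

lemma exists_smul_left_nrm_eq_ind (hRN : IsRNModule μ sm nrm) (hD : MeasurableSet D)
    (h : Indep sm x y D) : ∃ κ : L0 μ, nrm (sm κ x) = ind μ D ∧ Indep sm (sm κ x) y D := by
  obtain ⟨κ, hκ, hx⟩ := exists_smul_nrm_eq_ind hRN hD (h.ae_pos_left hRN hD)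
  refine ⟨κ, hx, h.smul_left hRN hD ?_⟩
  filter_upwards [hκ, h.ae_pos_left hRN hD] with ω hκ hx hω
  simp [hκ, hω, (hx hω).ne']

lemma exists_nrm_eq_ind (hRN : IsRNModule μ sm nrm) (hD : MeasurableSet D)
    (h : Indep sm x y D) :
    ∃ e₁ e₂ : S, nrm e₁ = ind μ D ∧ nrm e₂ = ind μ D ∧ Indep sm e₁ e₂ D := by
  obtain ⟨κ, hx, h₁⟩ := h.exists_smul_left_nrm_eq_ind hRN hD
  obtain ⟨κ', hy, h₂⟩ := h₁.symm.exists_smul_left_nrm_eq_ind hRN hD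
  exact ⟨_, _, hx, hy, h₂.symm⟩

end Indep

/-- The McShane extension of `|N|` from `ℚ²` to `ℝ²` for the `ℓ¹` distance. -/
def lipExt (N : ℚ × ℚ → ℝ) (a b : ℝ) : ℝ :=
  ⨅ q : ℚ × ℚ, (|N q| + (|a - q.1| + |b - q.2|))

section lipExt

variable (N : ℚ × ℚ → ℝ)

lemma lipExt_le (a b : ℝ) (q : ℚ × ℚ) : lipExt N a b ≤ |N q| + (|a - q.1| + |b - q.2|) :=
  ciInf_le ⟨0, by rintro _ ⟨q, rfl⟩; positivity⟩ q

lemma lipExt_nonneg (a b : ℝ) : 0 ≤ lipExt N a b :=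
  le_ciInf fun _ => by positivity

lemma lipExt_le_add (a b a' b' : ℝ) :
    lipExt N a b ≤ lipExt N a' b' + (|a - a'| + |b - b'|) := by
  rw [← sub_le_iff_le_add]
  refine le_ciInf fun q => ?_
  linarith [lipExt_le N a b q, abs_sub_le a a' q.1, abs_sub_le b b' q.2]

lemma abs_lipExt_sub_le (a b a' b' : ℝ) :
    |lipExt N a b - lipExt N a' b'| ≤ |a - a'| + |b - b'| :=
  abs_sub_le_iff.2 ⟨by linarith [lipExt_le_add N a b a' b'],
    by linarith [lipExt_le_add N a' b' a b, abs_sub_comm a a', abs_sub_comm b b']⟩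

lemma continuous_lipExt : Continuous fun x : ℝ × ℝ => lipExt N x.1 x.2 := by
  refine (LipschitzWith.of_dist_le_mul (K := 2) fun x y => ?_).continuous
  rw [Real.dist_eq, Prod.dist_eq, Real.dist_eq, Real.dist_eq]
  push_cast
  linarith [abs_lipExt_sub_le N x.1 x.2 y.1 y.2, le_max_left |x.1 - y.1| |x.2 - y.2|,
    le_max_right |x.1 - y.1| |x.2 - y.2|]

lemma lipExt_eq {a b v : ℝ} (hv : 0 ≤ v) (h : ∀ q : ℚ × ℚ, |v - N q| ≤ |a - q.1| + |b - q.2|) :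
    lipExt N a b = v := by
  refine le_antisymm (le_of_forall_pos_lt_add fun δ hδ => ?_) (le_ciInf fun q => ?_)
  · obtain ⟨p, hp⟩ := exists_rat_near a (by positivity : 0 < δ / 4)
    obtain ⟨q, hq⟩ := exists_rat_near b (by positivity : 0 < δ / 4)
    have hN := abs_le.1 (h (p, q))
    have hNq : |N (p, q)| ≤ v + (|a - p| + |b - q|) := abs_le.2 ⟨by linarith, by linarith⟩
    linarith [lipExt_le N a b (p, q)]
  · linarith [le_abs_self (N q), le_abs_self (v - N q), h q]

end lipExt

section Selection

variable {a b : ℝ}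

lemma exists_mem_Icc_nonneg_iff {f : ℝ → ℝ} (hab : a ≤ b) (hf : ContinuousOn f (Icc a b)) :
    (∃ t ∈ Icc a b, 0 ≤ f t) ↔
      ∀ n : ℕ, ∃ q : ℚ, -(1 / (n + 1 : ℝ)) < f (projIcc a b hab q) := by
  constructor
  · rintro ⟨t, ht, h₀⟩ n
    have hg : Continuous fun x => f (projIcc a b hab x) :=
      hf.comp_continuous (continuous_subtype_val.comp continuous_projIcc)
        fun x => (projIcc a b hab x).2
    have hn : 0 < 1 / (n + 1 : ℝ) := by positivity
    exact Rat.denseRange_cast.exists_mem_open (isOpen_lt continuous_const hg)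
      ⟨t, by simp only [mem_ofPred_eq, projIcc_of_mem hab ht]; linarith⟩
  · intro h
    by_contra! hneg
    obtain ⟨t, ht, hmax⟩ := isCompact_Icc.exists_isMaxOn (nonempty_Icc.2 hab) hf
    obtain ⟨n, hn⟩ := exists_nat_one_div_lt (neg_pos.2 (hneg t ht))
    obtain ⟨q, hq⟩ := h n
    linarith [isMaxOn_iff.1 hmax _ (projIcc a b hab q).2]

variable {W : Set Ω} (hW : MeasurableSet W) {G : Ω → ℝ → ℝ}
  (hGm : ∀ t, Measurable fun ω => G ω t)
include hW hGm

lemma measurableSet_exists_mem_Icc_nonneg (hGc : ∀ ω ∈ W, ContinuousOn (G ω) (Icc a b))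
    (hab : a ≤ b) : MeasurableSet (W ∩ {ω | ∃ t ∈ Icc a b, 0 ≤ G ω t}) := by
  have : W ∩ {ω | ∃ t ∈ Icc a b, 0 ≤ G ω t} =
      W ∩ ⋂ n : ℕ, ⋃ q : ℚ, {ω | -(1 / (n + 1 : ℝ)) < G ω (projIcc a b hab q)} := by
    ext ω
    simp only [mem_inter_iff, mem_ofPred_eq, mem_iInter, mem_iUnion]
    exact and_congr_right fun hω => exists_mem_Icc_nonneg_iff hab (hGc ω hω)
  rw [this]
  exact hW.inter (.iInter fun n => .iUnion fun q => measurableSet_lt measurable_const (hGm _))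

lemma exists_measurable_selection (hGc : ∀ ω ∈ W, ContinuousOn (G ω) (Icc a b))
    (hab : a ≤ b) :
    ∃ τ : Ω → ℝ, Measurable τ ∧ (∀ ω, τ ω ∈ Icc a b) ∧
      ∀ ω ∈ W, (∃ t ∈ Icc a b, 0 ≤ G ω t) → 0 ≤ G ω (τ ω) := by
  classical
  set E := W ∩ {ω | ∃ t ∈ Icc a b, 0 ≤ G ω t}
  set K := fun ω => Icc a b ∩ G ω ⁻¹' Ici 0
  have hK : ∀ ω ∈ E, sInf (K ω) ∈ K ω := fun ω hω =>
    (isCompact_Icc.of_isClosed_subset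
      ((hGc ω hω.1).preimage_isClosed_of_isClosed isClosed_Icc isClosed_Ici)
      inter_subset_left).sInf_mem (let ⟨t, ht, h₀⟩ := hω.2; ⟨t, ht, h₀⟩)
  set τ := fun ω => if ω ∈ E then sInf (K ω) else a
  have hτ : ∀ ω, τ ω ∈ Icc a b := fun ω => by
    by_cases hω : ω ∈ E
    · simpa [τ, hω] using (hK ω hω).1
    · simp [τ, hω, hab]
  refine ⟨τ, measurable_of_Iic fun s => ?_, hτ, fun ω hωW hne => ?_⟩
  · by_cases hs : a ≤ s
    · have : τ ⁻¹' Iic s = Eᶜ ∪ (W ∩ {ω | ∃ t ∈ Icc a (min b s), 0 ≤ G ω t}) := by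
        ext ω
        by_cases hω : ω ∈ E
        · obtain ⟨⟨hKa, hKb⟩, hK₀⟩ := hK ω hω
          have hKs : sInf (K ω) ≤ s ↔ ∃ t ∈ Icc a (min b s), 0 ≤ G ω t := by
            refine ⟨fun h => ⟨_, ⟨hKa, le_min hKb h⟩, hK₀⟩, fun ⟨t, ht, h₀⟩ => ?_⟩
            have htK : t ∈ K ω := ⟨⟨ht.1, ht.2.trans (min_le_left _ _)⟩, h₀⟩
            exact (csInf_le ⟨a, fun x hx => hx.1.1⟩ htK).trans (ht.2.trans (min_le_right _ _))
          simp [τ, hω, hKs, hω.1]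
        · simp [τ, hω, hs]
      rw [this]
      exact (measurableSet_exists_mem_Icc_nonneg hW hGm hGc hab).compl.union
        (measurableSet_exists_mem_Icc_nonneg hW hGm
          (fun ω hω => (hGc ω hω).mono (Icc_subset_Icc_right (min_le_left _ _))) (le_min hab hs))
    · have : τ ⁻¹' Iic s = ∅ :=
        eq_empty_of_forall_notMem fun ω hω => hs ((hτ ω).1.trans hω)
      rw [this]
      exact .empty
  · have hω : ω ∈ E := ⟨hωW, hne⟩
    simpa [τ, hω] using (hK ω hω).2

lemma exists_measurable_eq (hGc : ∀ ω ∈ W, ContinuousOn (G ω) (Icc a b)) (hab : a ≤ b)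
    {r : Ω → ℝ} (hr : Measurable r) (hra : ∀ ω ∈ W, G ω a ≤ r ω)
    (hrb : ∀ ω ∈ W, r ω ≤ G ω b) :
    ∃ τ : Ω → ℝ, Measurable τ ∧ ∀ ω ∈ W, τ ω ∈ Icc a b ∧ G ω (τ ω) = r ω := by
  obtain ⟨τ, hτm, hτ, hsel⟩ := exists_measurable_selection (G := fun ω t => -|G ω t - r ω|) hW
    (fun t => ((hGm t).sub hr).abs.neg) (fun ω hω => ((hGc ω hω).sub continuousOn_const).abs.neg)
    hab
  refine ⟨τ, hτm, fun ω hω => ⟨hτ ω, ?_⟩⟩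
  obtain ⟨t, ht, hGt⟩ := intermediate_value_Icc hab (hGc ω hω) ⟨hra ω hω, hrb ω hω⟩
  have := hsel ω hω ⟨t, ht, by simp [hGt]⟩
  simpa [sub_eq_zero] using this

end Selection

lemma coeFn_cst (r : ℝ) : ⇑(cst μ r) =ᵐ[μ] fun _ => r := AEEqFun.coeFn_const _ _

/-- A version of `(ω, a, b) ↦ ‖a e₁ + b e₂‖(ω)` that is measurable in `ω` and continuous in
`(a, b)`. -/
def coordNorm (sm : L0 μ → S → S) (nrm : S → L0 μ) (e₁ e₂ : S) (ω : Ω) (a b : ℝ) : ℝ :=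
  lipExt (fun q => nrm (sm (cst μ q.1) e₁ + sm (cst μ q.2) e₂) ω) a b

section coordNorm

variable {e₁ e₂ : S}

lemma coordNorm_nonneg (ω : Ω) (a b : ℝ) : 0 ≤ coordNorm sm nrm e₁ e₂ ω a b :=
  lipExt_nonneg _ _ _

lemma measurable_coordNorm {α β : Ω → ℝ} (hα : Measurable α) (hβ : Measurable β) :
    Measurable fun ω => coordNorm sm nrm e₁ e₂ ω (α ω) (β ω) :=
  Measurable.iInf fun _ =>
    (AEEqFun.measurable _).abs.add ((hα.sub_const _).abs.add (hβ.sub_const _).abs)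

lemma continuous_coordNorm (ω : Ω) :
    Continuous fun x : ℝ × ℝ => coordNorm sm nrm e₁ e₂ ω x.1 x.2 :=
  continuous_lipExt _

variable (hRN : IsRNModule μ sm nrm) (h₁ : nrm e₁ ≤ 1) (h₂ : nrm e₂ ≤ 1)
include hRN h₁ h₂

lemma ae_nrm_smul_add_smul_le (ξ η : L0 μ) :
    ∀ᵐ ω ∂μ, nrm (sm ξ e₁ + sm η e₂) ω ≤ |ξ ω| + |η ω| := by
  have h := hRN.nrm_add (sm ξ e₁) (sm η e₂)
  rw [hRN.nrm_smul, hRN.nrm_smul] at h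
  filter_upwards [AEEqFun.coeFn_le.2 h, AEEqFun.coeFn_le.2 h₁, AEEqFun.coeFn_le.2 h₂,
    AEEqFun.coeFn_add (|ξ| * nrm e₁) (|η| * nrm e₂), AEEqFun.coeFn_mul (|ξ|) (nrm e₁),
    AEEqFun.coeFn_mul (|η|) (nrm e₂), AEEqFun.coeFn_abs ξ, AEEqFun.coeFn_abs η,
    AEEqFun.coeFn_one (μ := μ) (β := ℝ)] with ω h h₁ h₂ s m₁ m₂ a₁ a₂ o
  simp only [s, m₁, m₂, a₁, a₂, o, Pi.add_apply, Pi.mul_apply, Pi.one_apply] at h h₁ h₂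
  linarith [mul_le_of_le_one_right (abs_nonneg (ξ ω)) h₁,
    mul_le_of_le_one_right (abs_nonneg (η ω)) h₂]

lemma ae_coordNorm_eq (ξ η : L0 μ) :
    ∀ᵐ ω ∂μ, coordNorm sm nrm e₁ e₂ ω (ξ ω) (η ω) = nrm (sm ξ e₁ + sm η e₂) ω := by
  have hdiff : ∀ q : ℚ × ℚ, ∀ᵐ ω ∂μ, |nrm (sm ξ e₁ + sm η e₂) ω -
      nrm (sm (cst μ q.1) e₁ + sm (cst μ q.2) e₂) ω| ≤ |ξ ω - q.1| + |η ω - q.2| := by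
    intro q
    have hsub : sm ξ e₁ + sm η e₂ - (sm (cst μ q.1) e₁ + sm (cst μ q.2) e₂) =
        sm (ξ - cst μ q.1) e₁ + sm (η - cst μ q.2) e₂ := by
      rw [hRN.sub_smul, hRN.sub_smul]; abel
    filter_upwards [hRN.ae_abs_sub_le (sm ξ e₁ + sm η e₂) (sm (cst μ q.1) e₁ + sm (cst μ q.2) e₂),
      ae_nrm_smul_add_smul_le hRN h₁ h₂ (ξ - cst μ q.1) (η - cst μ q.2),
      AEEqFun.coeFn_sub ξ (cst μ q.1), AEEqFun.coeFn_sub η (cst μ q.2),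
      coeFn_cst (μ := μ) (q.1 : ℝ), coeFn_cst (μ := μ) (q.2 : ℝ)] with ω h h' s₁ s₂ c₁ c₂
    rw [hsub] at h
    rw [s₁, s₂, Pi.sub_apply, Pi.sub_apply, c₁, c₂] at h'
    exact h.trans h'
  filter_upwards [ae_all_iff.2 hdiff, hRN.ae_nrm_nonneg (sm ξ e₁ + sm η e₂)] with ω h h₀
  exact lipExt_eq _ h₀ h

lemma ae_coordNorm_zero : ∀ᵐ ω ∂μ, coordNorm sm nrm e₁ e₂ ω 0 0 = 0 := by
  filter_upwards [ae_coordNorm_eq hRN h₁ h₂ 0 0, AEEqFun.coeFn_zero (μ := μ) (β := ℝ),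
    AEEqFun.coeFn_zero (μ := μ) (β := ℝ)] with ω h z z'
  rwa [z, hRN.zero_smul, hRN.zero_smul, add_zero, hRN.nrm_zero, z'] at h

lemma Indep.ae_eq_zero_of_coordNorm_eq_zero {D : Set Ω} (hD : MeasurableSet D)
    (hInd : Indep sm e₁ e₂ D) {ξ η : L0 μ}
    (h : ∀ᵐ ω ∂μ, ω ∈ D → coordNorm sm nrm e₁ e₂ ω (ξ ω) (η ω) = 0) :
    ∀ᵐ ω ∂μ, ω ∈ D → ξ ω = 0 ∧ η ω = 0 := by
  have hzero : sm (ξ * ind μ D) e₁ + sm (η * ind μ D) e₂ = 0 := by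
    refine hRN.nrm_eq_zero _ (AEEqFun.ext ?_)
    filter_upwards [ae_coordNorm_eq hRN h₁ h₂ (ξ * ind μ D) (η * ind μ D), h,
      ae_coordNorm_zero hRN h₁ h₂, AEEqFun.coeFn_mul ξ (ind μ D), AEEqFun.coeFn_mul η (ind μ D),
      coeFn_ind hD, AEEqFun.coeFn_zero (μ := μ) (β := ℝ)] with ω hM h h₀ m₁ m₂ hI z
    rw [← hM, m₁, m₂, z, Pi.mul_apply, Pi.mul_apply, hI]
    by_cases hω : ω ∈ D
    · simpa [hω] using h hω
    · simpa [hω] using h₀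
  obtain ⟨hξ, hη⟩ := hInd ξ η hzero
  filter_upwards [(mul_ind_eq_zero_iff hD).1 hξ, (mul_ind_eq_zero_iff hD).1 hη] with ω hξ hη hω
  exact ⟨hξ hω, hη hω⟩

lemma Indep.ae_coordNorm_pos {D : Set Ω} (hD : MeasurableSet D) (hInd : Indep sm e₁ e₂ D)
    {f g : ℝ → ℝ} (hf : Continuous f) (hg : Continuous g) {a b : ℝ} (hab : a ≤ b)
    (hfg : ∀ t ∈ Icc a b, f t ≠ 0 ∨ g t ≠ 0) :
    ∀ᵐ ω ∂μ, ω ∈ D → ∀ t ∈ Icc a b, 0 < coordNorm sm nrm e₁ e₂ ω (f t) (g t) := by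
  set M := coordNorm sm nrm e₁ e₂
  obtain ⟨τ, hτm, hτ, hsel⟩ := exists_measurable_selection (G := fun ω t => -M ω (f t) (g t))
    .univ (fun t => (measurable_coordNorm measurable_const measurable_const).neg)
    (fun ω _ => ((continuous_coordNorm ω).comp (hf.prodMk hg)).neg.continuousOn) hab
  have hfτ : Measurable (f ∘ τ) := hf.measurable.comp hτm
  have hgτ : Measurable (g ∘ τ) := hg.measurable.comp hτm
  set Z := D ∩ {ω | M ω (f (τ ω)) (g (τ ω)) ≤ 0}
  have hZ : MeasurableSet Z :=
    hD.inter (measurableSet_le (measurable_coordNorm hfτ hgτ) measurable_const)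
  have hZ₀ := Indep.ae_eq_zero_of_coordNorm_eq_zero hRN h₁ h₂ hD hInd
    (ξ := AEEqFun.mk _ ((hfτ.indicator hZ).aestronglyMeasurable))
    (η := AEEqFun.mk _ ((hgτ.indicator hZ).aestronglyMeasurable)) (by
      filter_upwards [AEEqFun.coeFn_mk _ (hfτ.indicator hZ).aestronglyMeasurable,
        AEEqFun.coeFn_mk _ (hgτ.indicator hZ).aestronglyMeasurable,
        ae_coordNorm_zero hRN h₁ h₂] with ω hξ hη h₀ hω
      rw [hξ, hη]
      by_cases hωZ : ω ∈ Z
      · simpa [hωZ] using le_antisymm hωZ.2 (coordNorm_nonneg _ _ _)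
      · simpa [hωZ] using h₀)
  filter_upwards [hZ₀, AEEqFun.coeFn_mk _ (hfτ.indicator hZ).aestronglyMeasurable,
    AEEqFun.coeFn_mk _ (hgτ.indicator hZ).aestronglyMeasurable] with ω hZ₀ hξ hη hω t ht
  by_contra! hle
  have hωZ : ω ∈ Z := ⟨hω, neg_nonneg.1 (hsel ω trivial ⟨t, ht, neg_nonneg.2 hle⟩)⟩
  obtain ⟨hfω, hgω⟩ := hZ₀ hω
  rw [hξ, indicator_of_mem hωZ] at hfω
  rw [hη, indicator_of_mem hωZ] at hgω
  exact (hfg _ (hτ ω)).elim (· hfω) (· hgω)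

end coordNorm

/-- The norm along the path `t ↦ (1 - 2t) e₁ + (t - t²) e₂` from `e₁` to `-e₁`, which avoids `0`. -/
def pathNorm (sm : L0 μ → S → S) (nrm : S → L0 μ) (e₁ e₂ : S) (ω : Ω) (t : ℝ) : ℝ :=
  coordNorm sm nrm e₁ e₂ ω (1 - 2 * t) (t - t ^ 2)

/-- The distance from `e₁` to the normalised path point. -/
def pathDist (sm : L0 μ → S → S) (nrm : S → L0 μ) (e₁ e₂ : S) (ω : Ω) (t : ℝ) : ℝ :=
  coordNorm sm nrm e₁ e₂ ω (1 - (1 - 2 * t) / pathNorm sm nrm e₁ e₂ ω t)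
    (-((t - t ^ 2) / pathNorm sm nrm e₁ e₂ ω t))

section Path

variable {e₁ e₂ : S}

lemma measurable_pathNorm {τ : Ω → ℝ} (hτ : Measurable τ) :
    Measurable fun ω => pathNorm sm nrm e₁ e₂ ω (τ ω) :=
  measurable_coordNorm (α := fun ω => 1 - 2 * τ ω) (β := fun ω => τ ω - τ ω ^ 2)
    (measurable_const.sub (hτ.const_mul 2)) (hτ.sub (hτ.pow_const 2))

lemma measurable_pathDist (t : ℝ) : Measurable fun ω => pathDist sm nrm e₁ e₂ ω t := by
  have hN := measurable_pathNorm (sm := sm) (nrm := nrm) (e₁ := e₁) (e₂ := e₂)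
    (measurable_const (a := t))
  exact measurable_coordNorm (measurable_const.sub (measurable_const.div hN))
    (measurable_const.div hN).neg

lemma continuous_pathNorm (ω : Ω) : Continuous (pathNorm sm nrm e₁ e₂ ω) :=
  (continuous_coordNorm ω).comp (f := fun t : ℝ => (1 - 2 * t, t - t ^ 2)) (by fun_prop)

lemma continuousOn_pathDist {ω : Ω} {s : Set ℝ} (h : ∀ t ∈ s, pathNorm sm nrm e₁ e₂ ω t ≠ 0) :
    ContinuousOn (pathDist sm nrm e₁ e₂ ω) s := by
  have hN := (continuous_pathNorm (sm := sm) (nrm := nrm) (e₁ := e₁) (e₂ := e₂) ω).continuousOn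
    (s := s)
  exact (continuous_coordNorm ω).comp_continuousOn (f := fun t : ℝ =>
    (1 - (1 - 2 * t) / pathNorm sm nrm e₁ e₂ ω t, -((t - t ^ 2) / pathNorm sm nrm e₁ e₂ ω t)))
    ((continuousOn_const.sub ((by fun_prop : Continuous fun t : ℝ => 1 - 2 * t).continuousOn.div
      hN h)).prodMk ((by fun_prop : Continuous fun t : ℝ => t - t ^ 2).continuousOn.div hN h).neg)

variable (hRN : IsRNModule μ sm nrm) {D : Set Ω} (hD : MeasurableSet D)
  (hn₁ : nrm e₁ = ind μ D) (hn₂ : nrm e₂ = ind μ D)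
include hRN hD hn₁ hn₂

lemma ae_coordNorm_left (r : ℝ) :
    ∀ᵐ ω ∂μ, coordNorm sm nrm e₁ e₂ ω r 0 = |r| * D.indicator (fun _ => (1 : ℝ)) ω := by
  have h : nrm (sm (cst μ r) e₁ + sm 0 e₂) = |cst μ r| * ind μ D := by
    rw [hRN.zero_smul, add_zero, hRN.nrm_smul, hn₁]
  filter_upwards [ae_coordNorm_eq hRN (hn₁ ▸ ind_le_one hD) (hn₂ ▸ ind_le_one hD) (cst μ r) 0,
    coeFn_cst (μ := μ) r, AEEqFun.coeFn_zero (μ := μ) (β := ℝ), AEEqFun.ext_iff.1 h,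
    AEEqFun.coeFn_mul (|cst μ r|) (ind μ D), AEEqFun.coeFn_abs (cst μ r), coeFn_ind hD]
    with ω hM c z h m a hI
  rw [c, z, h, m, Pi.mul_apply, a, c, hI] at hM
  exact hM

lemma exists_pathDist_eq (hInd : Indep sm e₁ e₂ D) {ε : L0 μ} (hε : Admissible μ D ε) :
    ∃ τ : Ω → ℝ, Measurable τ ∧ ∀ᵐ ω ∂μ, ω ∈ D →
      0 < pathNorm sm nrm e₁ e₂ ω (τ ω) ∧ pathDist sm nrm e₁ e₂ ω (τ ω) = ε ω := by
  have hpos := hInd.ae_coordNorm_pos hRN (hn₁ ▸ ind_le_one hD) (hn₂ ▸ ind_le_one hD) hD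
    (f := fun t => 1 - 2 * t) (g := fun t => t - t ^ 2) (by fun_prop) (by fun_prop) zero_le_one
    fun t _ => by
      by_contra! h
      have ht : t = 1 / 2 := by linarith [h.1]
      norm_num [ht] at h
  have hgood : ∀ᵐ ω ∂μ, ω ∈ D → (∀ t ∈ Icc (0 : ℝ) 1, 0 < pathNorm sm nrm e₁ e₂ ω t) ∧
      pathDist sm nrm e₁ e₂ ω 0 = 0 ∧ pathDist sm nrm e₁ e₂ ω 1 = 2 ∧ 0 < ε ω ∧ ε ω ≤ 2 := by
    filter_upwards [hpos, ae_coordNorm_left hRN hD hn₁ hn₂ 1, ae_coordNorm_left hRN hD hn₁ hn₂ (-1),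
      ae_coordNorm_left hRN hD hn₁ hn₂ 0, ae_coordNorm_left hRN hD hn₁ hn₂ 2, hε.2]
      with ω hpos h₁ hm₁ h₀ h₂ hε hω
    refine ⟨hpos hω, ?_, ?_, hε hω⟩ <;>
      norm_num [pathDist, pathNorm, h₁, hm₁, h₀, h₂, hω]
  obtain ⟨s, hs, hsm, hgood⟩ := hgood.exists_measurable_mem
  have hends : ∀ ω ∈ D ∩ s,
      pathDist sm nrm e₁ e₂ ω 0 ≤ ε ω ∧ ε ω ≤ pathDist sm nrm e₁ e₂ ω 1 := fun ω hω => by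
    obtain ⟨-, h₀, h₁, hε₀, hε₂⟩ := hgood ω hω.2 hω.1
    rw [h₀, h₁]
    exact ⟨hε₀.le, hε₂⟩
  obtain ⟨τ, hτm, hτ⟩ := exists_measurable_eq (hD.inter hsm) measurable_pathDist
    (fun ω hω => continuousOn_pathDist fun t ht => ((hgood ω hω.2 hω.1).1 t ht).ne')
    zero_le_one (AEEqFun.measurable ε) (fun ω hω => (hends ω hω).1) (fun ω hω => (hends ω hω).2)
  refine ⟨τ, hτm, ?_⟩
  filter_upwards [hs] with ω hω hωD
  obtain ⟨hτI, hτε⟩ := hτ ω ⟨hωD, hω⟩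
  exact ⟨(hgood ω hω hωD).1 _ hτI, hτε⟩

lemma exists_nrm_sub_eq_of_pathDist_eq {ε : L0 μ} {τ : Ω → ℝ} (hτm : Measurable τ)
    (hτ : ∀ᵐ ω ∂μ, ω ∈ D →
      0 < pathNorm sm nrm e₁ e₂ ω (τ ω) ∧ pathDist sm nrm e₁ e₂ ω (τ ω) = ε ω) :
    ∃ v : S, nrm v = ind μ D ∧ nrm (e₁ - v) = ε * ind μ D := by
  have h₁ := hn₁ ▸ ind_le_one hD
  have h₂ := hn₂ ▸ ind_le_one hD
  have hx : Measurable fun ω => 1 - 2 * τ ω := measurable_const.sub (hτm.const_mul 2)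
  have hy : Measurable fun ω => τ ω - τ ω ^ 2 := hτm.sub (hτm.pow_const 2)
  set X := AEEqFun.mk _ hx.aestronglyMeasurable
  set Y := AEEqFun.mk _ hy.aestronglyMeasurable
  have hw : ∀ᵐ ω ∂μ, nrm (sm X e₁ + sm Y e₂) ω = pathNorm sm nrm e₁ e₂ ω (τ ω) := by
    filter_upwards [ae_coordNorm_eq hRN h₁ h₂ X Y, AEEqFun.coeFn_mk _ hx.aestronglyMeasurable,
      AEEqFun.coeFn_mk _ hy.aestronglyMeasurable] with ω hM cx cy
    rw [← hM, cx, cy, pathNorm]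
  obtain ⟨κ, hκ, hv⟩ := exists_smul_nrm_eq_ind hRN hD (x := sm X e₁ + sm Y e₂) (by
    filter_upwards [hw, hτ] with ω hw hτ hω
    exact hw ▸ (hτ hω).1)
  refine ⟨_, hv, ?_⟩
  have hsub : e₁ - sm κ (sm X e₁ + sm Y e₂) = sm (1 - κ * X) e₁ + sm (-(κ * Y)) e₂ := by
    rw [hRN.smul_add, ← hRN.mul_smul, ← hRN.mul_smul, hRN.sub_smul, hRN.one_smul, hRN.neg_smul]
    abel
  rw [hsub]
  refine AEEqFun.ext ?_
  filter_upwards [ae_coordNorm_eq hRN h₁ h₂ (1 - κ * X) (-(κ * Y)),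
    AEEqFun.coeFn_mk _ hx.aestronglyMeasurable, AEEqFun.coeFn_mk _ hy.aestronglyMeasurable, hκ,
    hw, AEEqFun.coeFn_sub 1 (κ * X), AEEqFun.coeFn_one (μ := μ) (β := ℝ),
    AEEqFun.coeFn_mul κ X, AEEqFun.coeFn_neg (κ * Y), AEEqFun.coeFn_mul κ Y,
    AEEqFun.coeFn_mul ε (ind μ D), coeFn_ind hD, hτ, ae_coordNorm_left hRN hD hn₁ hn₂ 1]
    with ω hM cx cy cκ hw s o mX n mY m hI hτ hM₁
  rw [← hM, s, Pi.sub_apply, o, mX, n, Pi.neg_apply, mY, Pi.mul_apply, Pi.mul_apply, cx, cy,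
    cκ, m, Pi.mul_apply, hI]
  by_cases hω : ω ∈ D
  · simp only [indicator_of_mem hω, mul_one, Pi.one_apply]
    rw [hw, ← (hτ hω).2, pathDist, inv_mul_eq_div, inv_mul_eq_div]
  · simpa [hω] using hM₁

end Path

lemma admissible_one {D : Set Ω} : Admissible μ D 1 := by
  refine ⟨?_, ?_⟩
  · rw [← AEEqFun.coeFn_le]
    filter_upwards [AEEqFun.coeFn_one (μ := μ) (β := ℝ), AEEqFun.coeFn_zero (μ := μ) (β := ℝ)]
      with ω h₁ h₀
    simp [h₁, h₀]
  · filter_upwards [AEEqFun.coeFn_one (μ := μ) (β := ℝ)] with ω h₁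
    simp [h₁]

theorem rankGe2_iff_all_distances_general {Ω : Type*} [MeasurableSpace Ω] (μ : Measure Ω)
    {S : Type*} [AddCommGroup S]
    (sm : L0 μ → S → S) (nrm : S → L0 μ) (hRN : IsRNModule μ sm nrm)
    (D : Set Ω) (hDm : MeasurableSet D) :
    RankGe2 sm D ↔
      ∀ ε : L0 μ, Admissible μ D ε →
        ∃ u v : S, nrm u = ind μ D ∧ nrm v = ind μ D ∧ nrm (u - v) = ε * ind μ D := by
  refine ⟨fun ⟨x, y, hxy⟩ ε hε => ?_, fun h => ?_⟩
  · obtain ⟨e₁, e₂, hn₁, hn₂, hInd⟩ := hxy.exists_nrm_eq_ind hRN hDm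
    obtain ⟨τ, hτm, hτ⟩ := exists_pathDist_eq hRN hDm hn₁ hn₂ hInd hε
    obtain ⟨v, hv, he₁v⟩ := exists_nrm_sub_eq_of_pathDist_eq hRN hDm hn₁ hn₂ hτm hτ
    exact ⟨e₁, v, hn₁, hv, he₁v⟩
  · obtain ⟨u, v, hu, hv, huv⟩ := h 1 admissible_one
    exact ⟨u, v, indep_of_nrm_eq_ind hRN hDm hu hv (by rw [huv, one_mul])⟩

/-- **Lemma 3.2.** For `D ⊂ H(S)` with `P(D) > 0`: `Rank_D(S) ≥ 2` iff for every
admissible `ε` there are `u, v` with `‖u‖ = ‖v‖ = I_D` and `‖u - v‖ = ε I_D`. -/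
theorem rankGe2_iff_all_distances {Ω : Type*} [MeasurableSpace Ω] (μ : Measure Ω)
    [IsProbabilityMeasure μ] {S : Type*} [AddCommGroup S]
    (sm : L0 μ → S → S) (nrm : S → L0 μ) (hRN : IsRNModule μ sm nrm)
    (H : Set Ω) (hH : IsSupport nrm H)
    (D : Set Ω) (hDm : MeasurableSet D) (hDH : aeSub μ D H) (hDpos : 0 < μ D) :
    RankGe2 sm D ↔
      ∀ ε : L0 μ, Admissible μ D ε →
        ∃ u v : S, nrm u = ind μ D ∧ nrm v = ind μ D ∧ nrm (u - v) = ε * ind μ D :=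
  rankGe2_iff_all_distances_general μ sm nrm hRN D hDm

end RNM
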